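/- For all monomials X and Y in the free monoid on 𝒜, the polynomial [X·Y] − [Y·X] lies in the ideal ℐ. -/

import Mathlib

open scoped BigOperators

/-! ### Generic definitions over an arbitrary alphabet -/

section Generic

variable {α : Type*} {K : Type*} [Field K]

/-- The monomial (word) `w`, viewed as an element of the free associative algebra
`K⟨α⟩ = MonoidAlgebra K (FreeMonoid α)`. -/
noncomputable def Mw (w : List α) : MonoidAlgebra K (FreeMonoid α) :=
  MonoidAlgebra.single (FreeMonoid.ofList w) 1

/-- Strict deglex order on words, induced by a strict order `r` on the letters. -/
def WLt (r : α → α → Prop) (u v : List α) : Prop :=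
  u.length < v.length ∨ (u.length = v.length ∧ List.Lex r u v)

/-- Reflexive deglex order on words. -/
def WLe (r : α → α → Prop) (u v : List α) : Prop :=
  WLt r u v ∨ u = v

/-- `w` is the deglex-leading monomial of `f`. -/
def IsLM (r : α → α → Prop) (f : MonoidAlgebra K (FreeMonoid α)) (w : List α) : Prop :=
  FreeMonoid.ofList w ∈ f.coeff.support ∧
    ∀ u ∈ f.coeff.support, u ≠ FreeMonoid.ofList w → WLt r (FreeMonoid.toList u) w

/-- `p` is a submonomial of `w`. -/
def Submono (p w : List α) : Prop := ∃ l r, w = l ++ p ++ r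

/-- `f` is reduced to zero by the set `G`: `f = Σ λ_t · A_t · g_t · B_t` with
`T(A_t · g_t · B_t) ⪯ T(f)` for every `t` (and `f = 0` qualifies vacuously). -/
def Red0 (r : α → α → Prop) (G : Set (MonoidAlgebra K (FreeMonoid α)))
    (f : MonoidAlgebra K (FreeMonoid α)) : Prop :=
  f = 0 ∨
    ∃ (N : ℕ) (lam : Fin N → K) (A B : Fin N → List α)
      (g : Fin N → MonoidAlgebra K (FreeMonoid α)) (w : List α),
      (∀ t, g t ∈ G) ∧
      f = ∑ t, lam t • (Mw (A t) * g t * Mw (B t)) ∧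
      IsLM r f w ∧
      ∀ t u, IsLM r (Mw (A t) * g t * Mw (B t)) u → WLe r u w

/-- `(f, R; g, L)` is an S-quadruplet of `G`:  `f, g ∈ G`, `0 < |L| < |f|`,
`0 < |R| < |g|`, and `T(f)·R = L·T(g)`. -/
def IsSQuad (r : α → α → Prop) (G : Set (MonoidAlgebra K (FreeMonoid α)))
    (f : MonoidAlgebra K (FreeMonoid α)) (R : List α)
    (g : MonoidAlgebra K (FreeMonoid α)) (L : List α) : Prop :=
  f ∈ G ∧ g ∈ G ∧
    ∃ tf tg, IsLM r f tf ∧ IsLM r g tg ∧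
      0 < L.length ∧ L.length < tf.length ∧
      0 < R.length ∧ R.length < tg.length ∧
      tf ++ R = L ++ tg

/-- A clear S-quadruplet: the leader `T(f)·R`, with its first and last letters deleted,
has no leading monomial of an element of `G` as a submonomial. -/
def IsClearSQuad (r : α → α → Prop) (G : Set (MonoidAlgebra K (FreeMonoid α)))
    (f : MonoidAlgebra K (FreeMonoid α)) (R : List α)
    (g : MonoidAlgebra K (FreeMonoid α)) (L : List α) : Prop :=
  IsSQuad r G f R g L ∧
    ∀ tf, IsLM r f tf → ∀ g' ∈ G, ∀ tg', IsLM r g' tg' →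
      ¬ Submono tg' (((tf ++ R).drop 1).dropLast)

end Generic

/-! ### The quaternionic alphabet -/

/-- The alphabet `𝒜`: quaternionic letters `q l`, conjugate letters `qbar l` (`l < n`),
and the basis letters `i, j, k`. -/
inductive Letter (n : ℕ) where
  | q (l : Fin n)
  | qbar (l : Fin n)
  | i
  | j
  | k
deriving DecidableEq

namespace Letter

/-- Rank realizing the conjugate-alternating order
`q 0 ≺ qbar 0 ≺ q 1 ≺ qbar 1 ≺ ⋯ ≺ i ≺ j ≺ k`. -/
def rank {n : ℕ} : Letter n → ℕ
  | q l => 2 * l.val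
  | qbar l => 2 * l.val + 1
  | i => 2 * n
  | j => 2 * n + 1
  | k => 2 * n + 2

/-- The conjugate letter: `q l ↔ qbar l`; basis letters are fixed. -/
def conj {n : ℕ} : Letter n → Letter n
  | q l => qbar l
  | qbar l => q l
  | i => i
  | j => j
  | k => k

/-- Whether a letter is one of the basis letters `i, j, k` (the set `ℰ`). -/
def isE {n : ℕ} : Letter n → Bool
  | i => true
  | j => true
  | k => true
  | _ => false

end Letter

/-- The conjugate-alternating strict order on letters. -/
def llt {n : ℕ} (a b : Letter n) : Prop := a.rank < b.rank

/-- The conjugate-alternating order on letters (reflexive version). -/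
def lle {n : ℕ} (a b : Letter n) : Prop := a.rank ≤ b.rank

/-- The free associative algebra `K⟨𝒜⟩`. -/
abbrev FA (n : ℕ) (K : Type*) [Field K] := MonoidAlgebra K (FreeMonoid (Letter n))

/-- The bracket of a monomial: `[w] = w + w̄`, where conjugation is the anti-automorphism
sending `q l ↦ qbar l`, `qbar l ↦ q l` and `e ↦ -e` for basis letters `e`. -/
noncomputable def br {n : ℕ} {K : Type*} [Field K] (w : List (Letter n)) : FA n K :=
  Mw w + ((-1 : K) ^ (w.filter (fun a => a.isE)).length : K) • Mw ((w.map Letter.conj).reverse)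

/-! ### The defining ideal ℐ -/

/-- The generators of the defining ideal `ℐ`:
(1) the multiplication table of `i, j, k`;
(2) the conjugate-defining relations `2q̄ + q + iqi + jqj + kqk`;
(3) commutativity of the coordinate brackets `[q]`, `[iq]`, `[jq]`, `[kq]`
with every letter. -/
def Igens (n : ℕ) (K : Type*) [Field K] : Set (FA n K) :=
  {p | p = Mw [Letter.i, Letter.i] + 1 ∨ p = Mw [Letter.j, Letter.j] + 1 ∨
       p = Mw [Letter.k, Letter.k] + 1 ∨
       p = Mw [Letter.i, Letter.j] - Mw [Letter.k] ∨
       p = Mw [Letter.j, Letter.i] + Mw [Letter.k] ∨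
       p = Mw [Letter.i, Letter.k] + Mw [Letter.j] ∨
       p = Mw [Letter.k, Letter.i] - Mw [Letter.j] ∨
       p = Mw [Letter.k, Letter.j] + Mw [Letter.i] ∨
       p = Mw [Letter.j, Letter.k] - Mw [Letter.i]} ∪
  {p | ∃ l : Fin n,
       p = (2 : K) • Mw [Letter.qbar l] + Mw [Letter.q l]
           + Mw [Letter.i, Letter.q l, Letter.i]
           + Mw [Letter.j, Letter.q l, Letter.j]
           + Mw [Letter.k, Letter.q l, Letter.k]} ∪
  {p | ∃ (a : Letter n) (l : Fin n),
       p = Mw [a] * br [Letter.q l] - br [Letter.q l] * Mw [a] ∨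
       p = Mw [a] * br [Letter.i, Letter.q l] - br [Letter.i, Letter.q l] * Mw [a] ∨
       p = Mw [a] * br [Letter.j, Letter.q l] - br [Letter.j, Letter.q l] * Mw [a] ∨
       p = Mw [a] * br [Letter.k, Letter.q l] - br [Letter.k, Letter.q l] * Mw [a]}

/-- The defining ideal `ℐ` of the quaternionic polynomial algebra. -/
noncomputable def Iideal (n : ℕ) (K : Type*) [Field K] : TwoSidedIdeal (FA n K) :=
  TwoSidedIdeal.span (Igens n K)

/-! ### The conjectured Gröbner basis BG (parametrized by a letter substitution σ) -/

/-- The monomial `w`, with the substitution `σ` applied letterwise. -/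
noncomputable def Mσ {n : ℕ} {K : Type*} [Field K] (σ : Letter n → Letter n) (w : List (Letter n)) :
    FA n K := Mw (w.map σ)

/-- The bracket `[w]`, with the substitution `σ` applied letterwise before bracketing. -/
noncomputable def Brσ {n : ℕ} {K : Type*} [Field K] (σ : Letter n → Letter n) (w : List (Letter n)) :
    FA n K := br (w.map σ)

/-- The family `BGm` (`m ≥ 5`), with substitution `σ` applied:
`3·[2·A·y·1] − [2·A·y·1]·3` where `A` is a nonempty non-decreasing word over `𝒬 ∪ 𝒬̄` with
`3 ⪯ A`, every letter of `A` is `≺ y`, and `y ∈ 𝒬 ∪ ℰ`. -/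
def BGmSet (n : ℕ) (K : Type*) [Field K] (σ : Letter n → Letter n) : Set (FA n K) :=
  {p | ∃ (a b c : Fin n) (A : List (Letter n)) (y : Letter n),
        a < b ∧ b < c ∧ A ≠ [] ∧
        (∀ x ∈ A, ∃ l : Fin n, x = Letter.q l ∨ x = Letter.qbar l) ∧
        List.Chain' lle (Letter.q c :: A) ∧
        ((∃ l : Fin n, y = Letter.q l) ∨ y.isE) ∧
        (∀ x ∈ A, llt x y) ∧
        p = Mσ σ [Letter.q c] * Brσ σ ([Letter.q b] ++ A ++ [y, Letter.q a])
            - Brσ σ ([Letter.q b] ++ A ++ [y, Letter.q a]) * Mσ σ [Letter.q c]}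

/-- The set `BG` (with letter substitution `σ`; `BG` itself is `BGset n K id`).
Here `a ≺ b ≺ c ≺ d` in `Fin n` play the roles of the letters `1 ≺ 2 ≺ 3 ≺ 4` of `𝒬`,
and `e, e'` are basis letters. -/
def BGset (n : ℕ) (K : Type*) [Field K] (σ : Letter n → Letter n) : Set (FA n K) :=
  -- BG2(a)
  {p | p = Mσ σ [Letter.i, Letter.i] + 1 ∨ p = Mσ σ [Letter.j, Letter.j] + 1 ∨
       p = Mσ σ [Letter.k, Letter.k] + 1 ∨
       p = Mσ σ [Letter.i, Letter.j] - Mσ σ [Letter.k] ∨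
       p = Mσ σ [Letter.j, Letter.i] + Mσ σ [Letter.k] ∨
       p = Mσ σ [Letter.j, Letter.k] - Mσ σ [Letter.i] ∨
       p = Mσ σ [Letter.k, Letter.j] + Mσ σ [Letter.i] ∨
       p = Mσ σ [Letter.k, Letter.i] - Mσ σ [Letter.j] ∨
       p = Mσ σ [Letter.i, Letter.k] + Mσ σ [Letter.j]} ∪
  -- BG2(b)
  {p | ∃ a : Fin n,
       p = Mσ σ [Letter.qbar a, Letter.q a] - Mσ σ [Letter.q a, Letter.qbar a]} ∪
  {p | ∃ a b : Fin n, a < b ∧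
       (p = Brσ σ [Letter.q b] * Mσ σ [Letter.qbar a]
            - Mσ σ [Letter.qbar a] * Brσ σ [Letter.q b] ∨
        p = Brσ σ [Letter.q b] * Mσ σ [Letter.q a]
            - Mσ σ [Letter.q a] * Brσ σ [Letter.q b])} ∪
  -- BG2(c)
  {p | ∃ a b : Fin n, a < b ∧
       p = Mσ σ [Letter.q b] * Brσ σ [Letter.q a] - Brσ σ [Letter.q a] * Mσ σ [Letter.q b]} ∪
  {p | ∃ (a : Fin n) (e : Letter n), e.isE ∧
       p = Mσ σ [e] * Brσ σ [Letter.q a] - Brσ σ [Letter.q a] * Mσ σ [e]} ∪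
  -- BG3(a)
  {p | ∃ a : Fin n,
       p = Mσ σ [Letter.k, Letter.q a, Letter.k] + Mσ σ [Letter.j, Letter.q a, Letter.j]
           + Mσ σ [Letter.i, Letter.q a, Letter.i]
           + (2 : K) • Mσ σ [Letter.qbar a] + Mσ σ [Letter.q a]} ∪
  -- BG3(b)
  {p | ∃ a b c : Fin n, a < b ∧ b < c ∧
       (p = Brσ σ [Letter.q c, Letter.q b] * Mσ σ [Letter.q a]
            - Mσ σ [Letter.q a] * Brσ σ [Letter.q c, Letter.q b] ∨
        p = Brσ σ [Letter.q c, Letter.q a] * Mσ σ [Letter.qbar b]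
            - Mσ σ [Letter.qbar b] * Brσ σ [Letter.q c, Letter.q a] ∨
        p = Brσ σ [Letter.q c, Letter.q a] * Mσ σ [Letter.q b]
            - Mσ σ [Letter.q b] * Brσ σ [Letter.q c, Letter.q a])} ∪
  {p | ∃ a b : Fin n, a < b ∧
       (p = Brσ σ [Letter.q b, Letter.q a] * Mσ σ [Letter.qbar a]
            - Mσ σ [Letter.qbar a] * Brσ σ [Letter.q b, Letter.q a] ∨
        p = Brσ σ [Letter.q b, Letter.q a] * Mσ σ [Letter.q a]
            - Mσ σ [Letter.q a] * Brσ σ [Letter.q b, Letter.q a])} ∪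
  {p | ∃ (a b : Fin n) (e : Letter n), a < b ∧ e.isE ∧
       (p = Brσ σ [e, Letter.q b] * Mσ σ [Letter.q a]
            - Mσ σ [Letter.q a] * Brσ σ [e, Letter.q b] ∨
        p = Brσ σ [e, Letter.q a] * Mσ σ [Letter.q b]
            - Mσ σ [Letter.q b] * Brσ σ [e, Letter.q a] ∨
        p = Brσ σ [e, Letter.q a] * Mσ σ [Letter.qbar b]
            - Mσ σ [Letter.qbar b] * Brσ σ [e, Letter.q a])} ∪
  {p | ∃ (a : Fin n) (e : Letter n), e.isE ∧
       (p = Brσ σ [e, Letter.q a] * Mσ σ [Letter.q a]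
            - Mσ σ [Letter.q a] * Brσ σ [e, Letter.q a] ∨
        p = Brσ σ [e, Letter.q a] * Mσ σ [Letter.qbar a]
            - Mσ σ [Letter.qbar a] * Brσ σ [e, Letter.q a])} ∪
  {p | ∃ a : Fin n,
       (p = Brσ σ [Letter.j, Letter.q a] * Mσ σ [Letter.i]
            - Mσ σ [Letter.i] * Brσ σ [Letter.j, Letter.q a] ∨
        p = Brσ σ [Letter.k, Letter.q a] * Mσ σ [Letter.i]
            - Mσ σ [Letter.i] * Brσ σ [Letter.k, Letter.q a] ∨
        p = Brσ σ [Letter.k, Letter.q a] * Mσ σ [Letter.j]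
            - Mσ σ [Letter.j] * Brσ σ [Letter.k, Letter.q a])} ∪
  -- BG3(c)
  {p | ∃ a b : Fin n, a < b ∧
       p = Mσ σ [Letter.q b] * Brσ σ [Letter.q b, Letter.q a]
           - Brσ σ [Letter.q b, Letter.q a] * Mσ σ [Letter.q b]} ∪
  -- BG4
  {p | ∃ a b c : Fin n, a < b ∧ b < c ∧
       p = Mσ σ [Letter.q c] * Brσ σ [Letter.q b, Letter.q c, Letter.q a]
           - Brσ σ [Letter.q b, Letter.q c, Letter.q a] * Mσ σ [Letter.q c]} ∪
  {p | ∃ a b c d : Fin n, a < b ∧ b < c ∧ c < d ∧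
       p = Mσ σ [Letter.q c] * Brσ σ [Letter.q b, Letter.q d, Letter.q a]
           - Brσ σ [Letter.q b, Letter.q d, Letter.q a] * Mσ σ [Letter.q c]} ∪
  {p | ∃ (a b c : Fin n) (e : Letter n), a < b ∧ b < c ∧ e.isE ∧
       p = Mσ σ [Letter.q c] * Brσ σ [Letter.q b, e, Letter.q a]
           - Brσ σ [Letter.q b, e, Letter.q a] * Mσ σ [Letter.q c]} ∪
  {p | ∃ (a b : Fin n) (e e' : Letter n), a < b ∧ e.isE ∧ e'.isE ∧ lle e' e ∧
       ¬(e' = Letter.k ∧ e = Letter.k) ∧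
       p = Mσ σ [e'] * Brσ σ [Letter.q b, e, Letter.q a]
           - Brσ σ [Letter.q b, e, Letter.q a] * Mσ σ [e']} ∪
  -- BGm, m ≥ 5
  BGmSet n K σ

/-- The conjectured Gröbner basis `BG`. -/
def BG (n : ℕ) (K : Type*) [Field K] : Set (FA n K) := BGset n K id

/-- The normal-form shape of Theorem "Normal form": `M` is a submonomial of a word
`A_1 p_1 f_1 ⋯ A_r p_r f_r A_{r+1} e_1 f_{r+1} ⋯ e_s f_{r+s} e_{s+1}` satisfying
conditions (i)–(v).  (Indices are 0-based: `A 0, …, A r`; `p 0, …, p (r-1)`;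
`f 0, …, f (r+s-1)`; `e 0, …, e s`.) -/
def NormalShape (n : ℕ) (M : List (Letter n)) : Prop :=
  ∃ (r s : ℕ) (A : ℕ → List (Letter n)) (p f e : ℕ → Letter n),
    (∀ t < r, ∃ l : Fin n, p t = Letter.q l) ∧
    (∀ t < r + s, ∃ l : Fin n, f t = Letter.q l) ∧
    (∀ t < s + 1, (e t).isE) ∧
    (∀ t1 < s + 1, ∀ t2 < s + 1, e t1 = Letter.k → e t2 = Letter.k → t1 = t2) ∧
    (∀ t < r + 1,
      (∀ x ∈ A t, ∃ l : Fin n, x = Letter.q l ∨ x = Letter.qbar l) ∧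
      List.Chain' lle (A t)) ∧
    List.Chain' lle ((List.range r).map p ++ (List.range (s + 1)).map e) ∧
    List.Chain' lle ((List.range (r + s)).map f) ∧
    List.Chain' lle
      ((List.range r).flatMap (fun t => A t ++ [p t]) ++ A r ++ (List.range (s + 1)).map e) ∧
    (∀ t < r, llt (f t) (p t) ∧ ∀ x ∈ A t, llt x (p t)) ∧
    Submono M
      ((List.range r).flatMap (fun t => A t ++ [p t, f t]) ++ A r
        ++ (List.range s).flatMap (fun t => [e t, f (r + t)]) ++ [e s])

/-- A conjugation substitution: for each `l`, either both `q l` and `qbar l` are fixed or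
both are swapped; the basis letters are fixed. -/
def IsConjSub {n : ℕ} (σ : Letter n → Letter n) : Prop :=
  (∀ l : Fin n,
    (σ (Letter.q l) = Letter.q l ∧ σ (Letter.qbar l) = Letter.qbar l) ∨
    (σ (Letter.q l) = Letter.qbar l ∧ σ (Letter.qbar l) = Letter.q l)) ∧
  σ Letter.i = Letter.i ∧ σ Letter.j = Letter.j ∧ σ Letter.k = Letter.k

/-- The decomposition property for `f·R` from Proposition "k-decomp equiv":
`f·R = Σ_i λ_i·L_i·g_i·R_i` with `T(L_i·g_i·R_i) ⪯ T(f)·R` for every `i`, and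
`T(L_i·g_i·R_i) ≺ T(f)·R` whenever `L_i` is the empty monomial. -/
def SDecomp {α : Type*} {K : Type*} [Field K] (r : α → α → Prop)
    (G : Set (MonoidAlgebra K (FreeMonoid α)))
    (f : MonoidAlgebra K (FreeMonoid α)) (R : List α) : Prop :=
  ∃ (N : ℕ) (lam : Fin N → K) (Li Ri : Fin N → List α)
    (gi : Fin N → MonoidAlgebra K (FreeMonoid α)),
    (∀ i, gi i ∈ G) ∧
    f * Mw R = ∑ i, lam i • (Mw (Li i) * gi i * Mw (Ri i)) ∧
    ∀ tf, IsLM r f tf →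
      (∀ i u, IsLM r (Mw (Li i) * gi i * Mw (Ri i)) u → WLe r u (tf ++ R)) ∧
      (∀ i, Li i = [] →
        ∀ u, IsLM r (Mw (Li i) * gi i * Mw (Ri i)) u → WLt r u (tf ++ R))

/-- `G` is a Gröbner basis (w.r.t. the deglex order induced by `r`) of the two-sided
ideal `J`: `G ⊆ J`, `G` generates `J`, and the leading monomial of every nonzero element
of `J` has the leading monomial of some element of `G` as a submonomial. -/
def IsGroebnerBasis {α : Type*} {K : Type*} [Field K] (r : α → α → Prop)
    (G : Set (MonoidAlgebra K (FreeMonoid α)))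
    (J : TwoSidedIdeal (MonoidAlgebra K (FreeMonoid α))) : Prop :=
  (∀ g ∈ G, g ∈ J) ∧
  TwoSidedIdeal.span G = J ∧
  ∀ h, h ∈ J → h ≠ 0 →
    ∃ th, IsLM r h th ∧ ∃ g ∈ G, ∃ tg, IsLM r g tg ∧ Submono tg th

/-! ### Auxiliary development for Statement 1 -/

namespace BracketShiftAux

variable {n : ℕ} {K : Type*} [Field K]

/-- Basic multiplicativity of `Mw`. -/
lemma Mw_append (u v : List (Letter n)) :
    (Mw (u ++ v) : FA n K) = Mw u * Mw v := by
  unfold Mw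
  rw [MonoidAlgebra.single_mul_single, one_mul, FreeMonoid.ofList_append]

lemma Mw_nil : (Mw ([] : List (Letter n)) : FA n K) = 1 := by
  unfold Mw
  rfl

/-- The quotient ring `K⟨𝒜⟩/ℐ`. -/
abbrev Qt (n : ℕ) (K : Type*) [Field K] := (Iideal n K).ringCon.Quotient

/-- The quotient map. -/
noncomputable def qpi (n : ℕ) (K : Type*) [Field K] : FA n K →+* Qt n K :=
  (Iideal n K).ringCon.mk'

lemma mem_I_iff (x : FA n K) : x ∈ Iideal n K ↔ qpi n K x = 0 := by
  constructor
  · intro h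
    exact (RingCon.eq _).mpr h
  · intro h
    exact (RingCon.eq _).mp h

lemma gen_zero {g : FA n K} (hg : g ∈ Igens n K) : qpi n K g = 0 :=
  (mem_I_iff g).mp (TwoSidedIdeal.subset_span hg)

/-- Image of a word in the quotient. -/
noncomputable def pw (w : List (Letter n)) : Qt n K := qpi n K (Mw w)

lemma pw_append (u v : List (Letter n)) : (pw (u ++ v) : Qt n K) = pw u * pw v := by
  unfold pw; rw [Mw_append, map_mul]

lemma pw_nil : (pw ([] : List (Letter n)) : Qt n K) = 1 := by
  unfold pw; rw [Mw_nil, map_one]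

lemma pw_cons (a : Letter n) (w : List (Letter n)) :
    (pw (a :: w) : Qt n K) = pw [a] * pw w := by
  rw [show a :: w = [a] ++ w from rfl, pw_append]

lemma pw2 (a b : Letter n) : (pw [a, b] : Qt n K) = pw [a] * pw [b] := by
  rw [pw_cons]

lemma pw3 (a b c : Letter n) : (pw [a, b, c] : Qt n K) = pw [a] * pw [b] * pw [c] := by
  rw [pw_cons, pw_cons b, mul_assoc]

/-- Image of a scalar in the quotient. -/
noncomputable def sc (c : K) : Qt n K := qpi n K (algebraMap K (FA n K) c)

lemma sc_mul (a b : K) : (sc (a * b) : Qt n K) = sc a * sc b := by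
  unfold sc; rw [map_mul, map_mul]

lemma sc_one : (sc (1 : K) : Qt n K) = 1 := by
  unfold sc; rw [map_one, map_one]

lemma sc_neg_one : (sc (-1 : K) : Qt n K) = -1 := by
  unfold sc; rw [map_neg, map_one, map_neg, map_one]

lemma sc_two : (sc (2 : K) : Qt n K) = 2 := by
  unfold sc; rw [map_ofNat, map_ofNat]

lemma qpi_smul (c : K) (f : FA n K) : qpi n K (c • f) = sc c * qpi n K f := by
  rw [Algebra.smul_def, map_mul]; rfl

/-- Centrality in the quotient. -/
def Cen (x : Qt n K) : Prop := ∀ y, x * y = y * x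

lemma cen_add {x y : Qt n K} (hx : Cen x) (hy : Cen y) : Cen (x + y) := fun z => by
  rw [add_mul, mul_add, hx, hy]

lemma cen_mul {x y : Qt n K} (hx : Cen x) (hy : Cen y) : Cen (x * y) := fun z => by
  rw [mul_assoc, hy, ← mul_assoc, hx, mul_assoc]

lemma cen_neg {x : Qt n K} (hx : Cen x) : Cen (-x) := fun z => by
  rw [neg_mul, mul_neg, hx]

lemma cen_sub {x y : Qt n K} (hx : Cen x) (hy : Cen y) : Cen (x - y) := by
  rw [sub_eq_add_neg]; exact cen_add hx (cen_neg hy)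

lemma cen_zero : Cen (0 : Qt n K) := fun z => by rw [zero_mul, mul_zero]

lemma cen_one : Cen (1 : Qt n K) := fun z => by rw [one_mul, mul_one]

lemma cen_sc (c : K) : Cen (sc c : Qt n K) := by
  intro y
  obtain ⟨f, rfl⟩ : ∃ f, qpi n K f = y := Quot.inductionOn y fun f => ⟨f, rfl⟩
  show qpi n K _ * qpi n K f = qpi n K f * qpi n K _
  rw [← map_mul, ← map_mul, Algebra.commutes]

lemma cen_two : Cen (2 : Qt n K) := by
  rw [← sc_two]; exact cen_sc 2

/-- If `x` commutes with the image of every letter, it is central. -/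
lemma cen_of_letter_comm {x : Qt n K}
    (h : ∀ a : Letter n, x * pw [a] = pw [a] * x) : Cen x := by
  have hw : ∀ w : List (Letter n), x * pw w = pw w * x := by
    intro w
    induction w with
    | nil => rw [pw_nil, one_mul, mul_one]
    | cons a w ih => rw [pw_cons, ← mul_assoc, h a, mul_assoc, ih, ← mul_assoc]
  intro y
  obtain ⟨f, rfl⟩ : ∃ f, qpi n K f = y := Quot.inductionOn y fun f => ⟨f, rfl⟩
  induction f using MonoidAlgebra.induction_on with
  | of g =>
    have : (MonoidAlgebra.of K (FreeMonoid (Letter n)) g) = Mw (FreeMonoid.toList g) := rfl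
    rw [this]
    exact hw (FreeMonoid.toList g)
  | add f g hf hg => rw [map_add, mul_add, add_mul, hf, hg]
  | smul r f hf =>
    rw [qpi_smul, ← mul_assoc, ← cen_sc r x, mul_assoc, hf, ← mul_assoc, cen_sc r, mul_assoc]

/-- Short names for the images of letters. -/
noncomputable def ei : Qt n K := pw [Letter.i]
noncomputable def ej : Qt n K := pw [Letter.j]
noncomputable def ek : Qt n K := pw [Letter.k]
noncomputable def qq (l : Fin n) : Qt n K := pw [Letter.q l]
noncomputable def qb (l : Fin n) : Qt n K := pw [Letter.qbar l]

section Table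

/- The quaternionic multiplication table. -/

lemma hii : (ei * ei : Qt n K) = -1 := by
  have h := gen_zero (n := n) (K := K)
    (Set.mem_union_left _ (Set.mem_union_left _ (Or.inl rfl)))
  rw [map_add, map_one] at h
  have : (pw [Letter.i, Letter.i] : Qt n K) + 1 = 0 := h
  rw [pw2] at this
  exact eq_neg_of_add_eq_zero_left this

lemma hjj : (ej * ej : Qt n K) = -1 := by
  have h := gen_zero (n := n) (K := K)
    (Set.mem_union_left _ (Set.mem_union_left _ (Or.inr (Or.inl rfl))))
  rw [map_add, map_one] at h
  have : (pw [Letter.j, Letter.j] : Qt n K) + 1 = 0 := h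
  rw [pw2] at this
  exact eq_neg_of_add_eq_zero_left this

lemma hkk : (ek * ek : Qt n K) = -1 := by
  have h := gen_zero (n := n) (K := K)
    (Set.mem_union_left _ (Set.mem_union_left _ (Or.inr (Or.inr (Or.inl rfl)))))
  rw [map_add, map_one] at h
  have : (pw [Letter.k, Letter.k] : Qt n K) + 1 = 0 := h
  rw [pw2] at this
  exact eq_neg_of_add_eq_zero_left this

lemma hij : (ei * ej : Qt n K) = ek := by
  have h := gen_zero (n := n) (K := K)
    (Set.mem_union_left _ (Set.mem_union_left _ (Or.inr (Or.inr (Or.inr (Or.inl rfl))))))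
  rw [map_sub] at h
  have : (pw [Letter.i, Letter.j] : Qt n K) - pw [Letter.k] = 0 := h
  rw [pw2] at this
  exact sub_eq_zero.mp this

lemma hji : (ej * ei : Qt n K) = -ek := by
  have h := gen_zero (n := n) (K := K)
    (Set.mem_union_left _ (Set.mem_union_left _
      (Or.inr (Or.inr (Or.inr (Or.inr (Or.inl rfl)))))))
  rw [map_add] at h
  have : (pw [Letter.j, Letter.i] : Qt n K) + pw [Letter.k] = 0 := h
  rw [pw2] at this
  exact eq_neg_of_add_eq_zero_left this

lemma hik : (ei * ek : Qt n K) = -ej := by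
  have h := gen_zero (n := n) (K := K)
    (Set.mem_union_left _ (Set.mem_union_left _
      (Or.inr (Or.inr (Or.inr (Or.inr (Or.inr (Or.inl rfl))))))))
  rw [map_add] at h
  have : (pw [Letter.i, Letter.k] : Qt n K) + pw [Letter.j] = 0 := h
  rw [pw2] at this
  exact eq_neg_of_add_eq_zero_left this

lemma hki : (ek * ei : Qt n K) = ej := by
  have h := gen_zero (n := n) (K := K)
    (Set.mem_union_left _ (Set.mem_union_left _
      (Or.inr (Or.inr (Or.inr (Or.inr (Or.inr (Or.inr (Or.inl rfl)))))))))
  rw [map_sub] at h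
  have : (pw [Letter.k, Letter.i] : Qt n K) - pw [Letter.j] = 0 := h
  rw [pw2] at this
  exact sub_eq_zero.mp this

lemma hkj : (ek * ej : Qt n K) = -ei := by
  have h := gen_zero (n := n) (K := K)
    (Set.mem_union_left _ (Set.mem_union_left _
      (Or.inr (Or.inr (Or.inr (Or.inr (Or.inr (Or.inr (Or.inr (Or.inl rfl))))))))))
  rw [map_add] at h
  have : (pw [Letter.k, Letter.j] : Qt n K) + pw [Letter.i] = 0 := h
  rw [pw2] at this
  exact eq_neg_of_add_eq_zero_left this

lemma hjk : (ej * ek : Qt n K) = ei := by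
  have h := gen_zero (n := n) (K := K)
    (Set.mem_union_left _ (Set.mem_union_left _
      (Or.inr (Or.inr (Or.inr (Or.inr (Or.inr (Or.inr (Or.inr (Or.inr rfl))))))))))
  rw [map_sub] at h
  have : (pw [Letter.j, Letter.k] : Qt n K) - pw [Letter.i] = 0 := h
  rw [pw2] at this
  exact sub_eq_zero.mp this

end Table

/-- The defining relation for conjugate letters. -/
lemma hrel2 (l : Fin n) :
    (2 : Qt n K) * qb l + qq l + ei * qq l * ei + ej * qq l * ej + ek * qq l * ek = 0 := by
  have h := gen_zero (n := n) (K := K)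
    (Set.mem_union_left _ (Set.mem_union_right _ ⟨l, rfl⟩))
  rw [map_add, map_add, map_add, map_add, qpi_smul, sc_two] at h
  have h3 : ∀ (a b : Letter n), qpi n K (Mw [a, Letter.q l, b]) =
      (pw [a] : Qt n K) * qq l * pw [b] := fun a b => pw3 a _ b
  calc (2 : Qt n K) * qb l + qq l + ei * qq l * ei + ej * qq l * ej + ek * qq l * ek
      = 2 * qpi n K (Mw [Letter.qbar l]) + qpi n K (Mw [Letter.q l])
        + qpi n K (Mw [Letter.i, Letter.q l, Letter.i])
        + qpi n K (Mw [Letter.j, Letter.q l, Letter.j])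
        + qpi n K (Mw [Letter.k, Letter.q l, Letter.k]) := by
        rw [h3, h3, h3]; rfl
    _ = 0 := h

/-- The images of the coordinate brackets. -/
noncomputable def B0 (l : Fin n) : Qt n K := qq l + qb l
noncomputable def B1 (l : Fin n) : Qt n K := ei * qq l - qb l * ei
noncomputable def B2 (l : Fin n) : Qt n K := ej * qq l - qb l * ej
noncomputable def B3 (l : Fin n) : Qt n K := ek * qq l - qb l * ek

lemma qpi_br0 (l : Fin n) : qpi n K (br [Letter.q l]) = B0 l := by
  unfold br B0
  rw [map_add, qpi_smul]
  simp only [List.filter, List.map, List.reverse_singleton, Letter.isE, Letter.conj,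
    List.length_nil, pow_zero, sc_one, one_mul]
  rfl

lemma qpi_br1 (l : Fin n) : qpi n K (br [Letter.i, Letter.q l]) = B1 l := by
  unfold br B1
  rw [map_add, qpi_smul]
  simp only [List.filter, List.map, List.reverse, Letter.isE, Letter.conj,
    List.length_cons, List.length_nil, zero_add, pow_one, sc_neg_one]
  have h1 : qpi n K (Mw [Letter.i, Letter.q l]) = (ei * qq l : Qt n K) := pw2 _ _
  have h2 : qpi n K (Mw ([Letter.i, Letter.qbar l].reverseAux ([] : List (Letter n))))
      = (qb l * ei : Qt n K) := pw2 _ _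
  rw [h1, h2, neg_one_mul, ← sub_eq_add_neg]

lemma qpi_br2 (l : Fin n) : qpi n K (br [Letter.j, Letter.q l]) = B2 l := by
  unfold br B2
  rw [map_add, qpi_smul]
  simp only [List.filter, List.map, List.reverse, Letter.isE, Letter.conj,
    List.length_cons, List.length_nil, zero_add, pow_one, sc_neg_one]
  have h1 : qpi n K (Mw [Letter.j, Letter.q l]) = (ej * qq l : Qt n K) := pw2 _ _
  have h2 : qpi n K (Mw ([Letter.j, Letter.qbar l].reverseAux ([] : List (Letter n))))
      = (qb l * ej : Qt n K) := pw2 _ _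
  rw [h1, h2, neg_one_mul, ← sub_eq_add_neg]

lemma qpi_br3 (l : Fin n) : qpi n K (br [Letter.k, Letter.q l]) = B3 l := by
  unfold br B3
  rw [map_add, qpi_smul]
  simp only [List.filter, List.map, List.reverse, Letter.isE, Letter.conj,
    List.length_cons, List.length_nil, zero_add, pow_one, sc_neg_one]
  have h1 : qpi n K (Mw [Letter.k, Letter.q l]) = (ek * qq l : Qt n K) := pw2 _ _
  have h2 : qpi n K (Mw ([Letter.k, Letter.qbar l].reverseAux ([] : List (Letter n))))
      = (qb l * ek : Qt n K) := pw2 _ _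
  rw [h1, h2, neg_one_mul, ← sub_eq_add_neg]

/-- Centrality of the coordinate brackets. -/
lemma cen_B0 (l : Fin n) : Cen (B0 l : Qt n K) := by
  apply cen_of_letter_comm
  intro a
  have h := gen_zero (n := n) (K := K)
    (Set.mem_union_right _ ⟨a, l, Or.inl rfl⟩)
  rw [map_sub, map_mul, map_mul, qpi_br0] at h
  exact (sub_eq_zero.mp h).symm

lemma cen_B1 (l : Fin n) : Cen (B1 l : Qt n K) := by
  apply cen_of_letter_comm
  intro a
  have h := gen_zero (n := n) (K := K)
    (Set.mem_union_right _ ⟨a, l, Or.inr (Or.inl rfl)⟩)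
  rw [map_sub, map_mul, map_mul, qpi_br1] at h
  exact (sub_eq_zero.mp h).symm

lemma cen_B2 (l : Fin n) : Cen (B2 l : Qt n K) := by
  apply cen_of_letter_comm
  intro a
  have h := gen_zero (n := n) (K := K)
    (Set.mem_union_right _ ⟨a, l, Or.inr (Or.inr (Or.inl rfl))⟩)
  rw [map_sub, map_mul, map_mul, qpi_br2] at h
  exact (sub_eq_zero.mp h).symm

lemma cen_B3 (l : Fin n) : Cen (B3 l : Qt n K) := by
  apply cen_of_letter_comm
  intro a
  have h := gen_zero (n := n) (K := K)
    (Set.mem_union_right _ ⟨a, l, Or.inr (Or.inr (Or.inr rfl))⟩)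
  rw [map_sub, map_mul, map_mul, qpi_br3] at h
  exact (sub_eq_zero.mp h).symm

/-! ### Part 2: the internal conjugation `Nf` and the `V`-decomposition -/

lemma ei_def : (pw [Letter.i] : Qt n K) = ei := rfl
lemma ej_def : (pw [Letter.j] : Qt n K) = ej := rfl
lemma ek_def : (pw [Letter.k] : Qt n K) = ek := rfl
lemma qq_def (l : Fin n) : (pw [Letter.q l] : Qt n K) = qq l := rfl
lemma qb_def (l : Fin n) : (pw [Letter.qbar l] : Qt n K) = qb l := rfl

/-- The image of the scalar `1/2`. -/
noncomputable def hf : Qt n K := sc ((2 : K)⁻¹)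

lemma cen_hf : Cen (hf : Qt n K) := cen_sc _

lemma hf2 (hK : (2 : K) ≠ 0) : (hf : Qt n K) * 2 = 1 := by
  rw [hf, ← sc_two, ← sc_mul, inv_mul_cancel₀ hK, sc_one]

lemma hfmul(hK : (2 : K) ≠ 0)  (x : Qt n K) : hf * (2 * x) = x := by
  rw [← mul_assoc, hf2 hK, one_mul]

/-- Pull a central element through a product. -/
lemma swapC {z : Qt n K} (hz : Cen z) (u v : Qt n K) : u * (z * v) = z * (u * v) := by
  rw [← mul_assoc, ← hz u, mul_assoc]

lemma cpull {z : Qt n K} (hz : Cen z) (u v : Qt n K) : z * (u * v) = u * (z * v) :=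
  (swapC hz u v).symm

/-- The internal conjugation `x ↦ -(x + ixi + jxj + kxk)/2` of the quotient. -/
noncomputable def Nf (x : Qt n K) : Qt n K :=
  -(hf * (x + ei * x * ei + ej * x * ej + ek * x * ek))

lemma Nf_add (x y : Qt n K) : Nf (x + y) = Nf x + Nf y := by
  unfold Nf; noncomm_ring

lemma Nf_neg (x : Qt n K) : Nf (-x) = -Nf x := by
  unfold Nf; noncomm_ring

lemma Nf_sub (x y : Qt n K) : Nf (x - y) = Nf x - Nf y := by
  rw [sub_eq_add_neg, Nf_add, Nf_neg, sub_eq_add_neg]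

lemma Nf_cenmul {z : Qt n K} (hz : Cen z) (x : Qt n K) : Nf (z * x) = z * Nf x := by
  unfold Nf
  have hswap : ∀ u v : Qt n K, u * (z * x) * v = z * (u * x * v) := fun u v => by
    rw [← mul_assoc u z x, ← hz u, mul_assoc z u x, mul_assoc z (u * x) v]
  rw [hswap ei ei, hswap ej ej, hswap ek ek, ← mul_add, ← mul_add, ← mul_add,
    mul_neg, cpull cen_hf z]

lemma Nf_cen (hK : (2 : K) ≠ 0) {z : Qt n K} (hz : Cen z) : Nf z = z := by
  unfold Nf
  rw [← hz ei, ← hz ej, ← hz ek, mul_assoc z, mul_assoc z, mul_assoc z, hii, hjj, hkk,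
    mul_neg_one]
  have h : z + -z + -z + -z = -(2 * z) := by rw [two_mul]; abel
  rw [h, mul_neg, neg_neg, ← mul_assoc, hf2 hK, one_mul]

lemma Nf_one (hK : (2 : K) ≠ 0) : Nf (1 : Qt n K) = 1 := Nf_cen hK cen_one

lemma Nf_ei (hK : (2 : K) ≠ 0) : Nf (ei : Qt n K) = -ei := by
  unfold Nf
  rw [hii, neg_one_mul, hji, neg_mul, hkj, neg_neg, hki, hjk]
  have h : (ei : Qt n K) + -ei + ei + ei = 2 * ei := by rw [two_mul]; abel
  rw [h, hfmul hK]

lemma Nf_ej (hK : (2 : K) ≠ 0) : Nf (ej : Qt n K) = -ej := by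
  unfold Nf
  rw [hij, hki, hjj, neg_one_mul, hkj, neg_mul, hik, neg_neg]
  have h : (ej : Qt n K) + ej + -ej + ej = 2 * ej := by rw [two_mul]; abel
  rw [h, hfmul hK]

lemma Nf_ek (hK : (2 : K) ≠ 0) : Nf (ek : Qt n K) = -ek := by
  unfold Nf
  rw [hik, neg_mul, hji, neg_neg, hjk, hij, hkk, neg_one_mul]
  have h : (ek : Qt n K) + ek + ek + -ek = 2 * ek := by rw [two_mul]; abel
  rw [h, hfmul hK]

lemma Nf_q (hK : (2 : K) ≠ 0) (l : Fin n) : Nf (qq l : Qt n K) = qb l := by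
  unfold Nf
  have hS : (qq l : Qt n K) + ei * qq l * ei + ej * qq l * ej + ek * qq l * ek
      = -(2 * qb l) := by
    rw [eq_neg_iff_add_eq_zero]
    calc qq l + ei * qq l * ei + ej * qq l * ej + ek * qq l * ek + 2 * qb l
        = 2 * qb l + qq l + ei * qq l * ei + ej * qq l * ej + ek * qq l * ek := by abel
      _ = 0 := hrel2 l
  rw [hS, mul_neg, neg_neg, hfmul hK]

lemma qb_eq (l : Fin n) : (qb l : Qt n K) = B0 l - qq l := by
  unfold B0; abel

lemma Nf_qb (hK : (2 : K) ≠ 0) (l : Fin n) : Nf (qb l : Qt n K) = qq l := by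
  rw [qb_eq, Nf_sub, Nf_cen hK (cen_B0 l), Nf_q hK, qb_eq]
  abel

lemma q_decomp (hK : (2 : K) ≠ 0) (l : Fin n) :
    (qq l : Qt n K) = hf * (B0 l - B1 l * ei - B2 l * ej - B3 l * ek) := by
  have e1 : (B1 l : Qt n K) * ei = ei * qq l * ei + qb l := by
    unfold B1; rw [sub_mul, mul_assoc (qb l), hii, mul_neg_one, sub_neg_eq_add]
  have e2 : (B2 l : Qt n K) * ej = ej * qq l * ej + qb l := by
    unfold B2; rw [sub_mul, mul_assoc (qb l), hjj, mul_neg_one, sub_neg_eq_add]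
  have e3 : (B3 l : Qt n K) * ek = ek * qq l * ek + qb l := by
    unfold B3; rw [sub_mul, mul_assoc (qb l), hkk, mul_neg_one, sub_neg_eq_add]
  have hS : (B0 l : Qt n K) - B1 l * ei - B2 l * ej - B3 l * ek = 2 * qq l := by
    rw [e1, e2, e3]
    unfold B0
    calc qq l + qb l - (ei * qq l * ei + qb l) - (ej * qq l * ej + qb l)
        - (ek * qq l * ek + qb l)
        = 2 * qq l - (2 * qb l + qq l + ei * qq l * ei + ej * qq l * ej + ek * qq l * ek)
          := by rw [two_mul, two_mul]; abel
      _ = 2 * qq l := by rw [hrel2 l, sub_zero]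
  rw [hS, hfmul hK]

lemma qb_decomp (hK : (2 : K) ≠ 0) (l : Fin n) :
    (qb l : Qt n K) = hf * (B0 l + B1 l * ei + B2 l * ej + B3 l * ek) := by
  rw [qb_eq, q_decomp hK l]
  have hB : (B0 l : Qt n K) = hf * (2 * B0 l) := (hfmul hK _).symm
  calc (B0 l : Qt n K) - hf * (B0 l - B1 l * ei - B2 l * ej - B3 l * ek)
      = hf * (2 * B0 l) - hf * (B0 l - B1 l * ei - B2 l * ej - B3 l * ek) := by rw [← hB]
    _ = hf * (2 * B0 l - (B0 l - B1 l * ei - B2 l * ej - B3 l * ek)) := by rw [← mul_sub]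
    _ = hf * (B0 l + B1 l * ei + B2 l * ej + B3 l * ek) := by
        rw [show (2 * B0 l - (B0 l - B1 l * ei - B2 l * ej - B3 l * ek) : Qt n K)
          = B0 l + B1 l * ei + B2 l * ej + B3 l * ek from by rw [two_mul]; abel]

/-- The `V`-decomposition predicate: central coordinates along `1, i, j, k`. -/
def VV (x : Qt n K) : Prop :=
  ∃ z0 z1 z2 z3 : Qt n K, Cen z0 ∧ Cen z1 ∧ Cen z2 ∧ Cen z3 ∧
    x = z0 + z1 * ei + z2 * ej + z3 * ek

lemma VV_add {x y : Qt n K} (hx : VV x) (hy : VV y) : VV (x + y) := by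
  obtain ⟨a0, a1, a2, a3, h0, h1, h2, h3, rfl⟩ := hx
  obtain ⟨b0, b1, b2, b3, g0, g1, g2, g3, rfl⟩ := hy
  exact ⟨a0 + b0, a1 + b1, a2 + b2, a3 + b3, cen_add h0 g0, cen_add h1 g1,
    cen_add h2 g2, cen_add h3 g3, by rw [add_mul, add_mul, add_mul]; abel⟩

lemma VV_cen_mul {z x : Qt n K} (hz : Cen z) (hx : VV x) : VV (z * x) := by
  obtain ⟨a0, a1, a2, a3, h0, h1, h2, h3, rfl⟩ := hx
  exact ⟨z * a0, z * a1, z * a2, z * a3, cen_mul hz h0, cen_mul hz h1, cen_mul hz h2,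
    cen_mul hz h3, by rw [mul_add, mul_add, mul_add, mul_assoc, mul_assoc, mul_assoc]⟩

lemma VV_of_cen {z : Qt n K} (hz : Cen z) : VV z :=
  ⟨z, 0, 0, 0, hz, cen_zero, cen_zero, cen_zero, by simp⟩

lemma VV_neg {x : Qt n K} (hx : VV x) : VV (-x) := by
  have h := VV_cen_mul (cen_neg cen_one) hx
  rwa [neg_one_mul] at h

lemma VV_sub {x y : Qt n K} (hx : VV x) (hy : VV y) : VV (x - y) := by
  rw [sub_eq_add_neg]; exact VV_add hx (VV_neg hy)

lemma ei_mul_V {z0 z1 z2 z3 : Qt n K} (h0 : Cen z0) (h1 : Cen z1) (h2 : Cen z2)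
    (h3 : Cen z3) :
    ei * (z0 + z1 * ei + z2 * ej + z3 * ek) = -z1 + z0 * ei + (-z3) * ej + z2 * ek := by
  simp only [mul_add, swapC h1, swapC h2, swapC h3, ← h0 ei, hii, hij, hik,
    mul_neg_one, mul_neg, neg_mul, mul_one, one_mul, neg_neg]
  abel

lemma ej_mul_V {z0 z1 z2 z3 : Qt n K} (h0 : Cen z0) (h1 : Cen z1) (h2 : Cen z2)
    (h3 : Cen z3) :
    ej * (z0 + z1 * ei + z2 * ej + z3 * ek) = -z2 + z3 * ei + z0 * ej + (-z1) * ek := by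
  simp only [mul_add, swapC h1, swapC h2, swapC h3, ← h0 ej, hji, hjj, hjk,
    mul_neg_one, mul_neg, neg_mul, mul_one, one_mul, neg_neg]
  abel

lemma ek_mul_V {z0 z1 z2 z3 : Qt n K} (h0 : Cen z0) (h1 : Cen z1) (h2 : Cen z2)
    (h3 : Cen z3) :
    ek * (z0 + z1 * ei + z2 * ej + z3 * ek) = -z3 + (-z2) * ei + z1 * ej + z0 * ek := by
  simp only [mul_add, swapC h1, swapC h2, swapC h3, ← h0 ek, hki, hkj, hkk,
    mul_neg_one, mul_neg, neg_mul, mul_one, one_mul, neg_neg]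
  abel

lemma VV_mul_ei {x : Qt n K} (hx : VV x) : VV (ei * x) := by
  obtain ⟨z0, z1, z2, z3, h0, h1, h2, h3, rfl⟩ := hx
  exact ⟨-z1, z0, -z3, z2, cen_neg h1, h0, cen_neg h3, h2, ei_mul_V h0 h1 h2 h3⟩

lemma VV_mul_ej {x : Qt n K} (hx : VV x) : VV (ej * x) := by
  obtain ⟨z0, z1, z2, z3, h0, h1, h2, h3, rfl⟩ := hx
  exact ⟨-z2, z3, z0, -z1, cen_neg h2, h3, h0, cen_neg h1, ej_mul_V h0 h1 h2 h3⟩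

lemma VV_mul_ek {x : Qt n K} (hx : VV x) : VV (ek * x) := by
  obtain ⟨z0, z1, z2, z3, h0, h1, h2, h3, rfl⟩ := hx
  exact ⟨-z3, -z2, z1, z0, cen_neg h3, cen_neg h2, h1, h0, ek_mul_V h0 h1 h2 h3⟩

lemma qq_mul_expand (hK : (2 : K) ≠ 0) (l : Fin n) (x : Qt n K) :
    (qq l : Qt n K) * x
      = hf * (B0 l * x - B1 l * (ei * x) - B2 l * (ej * x) - B3 l * (ek * x)) := by
  rw [q_decomp hK l, mul_assoc, sub_mul, sub_mul, sub_mul, mul_assoc (B1 l),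
    mul_assoc (B2 l), mul_assoc (B3 l)]

lemma VV_mul_q (hK : (2 : K) ≠ 0) (l : Fin n) {x : Qt n K} (hx : VV x) : VV ((qq l : Qt n K) * x) := by
  rw [qq_mul_expand hK l x]
  exact VV_cen_mul cen_hf (VV_sub (VV_sub (VV_sub (VV_cen_mul (cen_B0 l) hx)
    (VV_cen_mul (cen_B1 l) (VV_mul_ei hx))) (VV_cen_mul (cen_B2 l) (VV_mul_ej hx)))
    (VV_cen_mul (cen_B3 l) (VV_mul_ek hx)))

lemma VV_mul_letter (hK : (2 : K) ≠ 0) (a : Letter n) {x : Qt n K} (hx : VV x) : VV (pw [a] * x) := by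
  cases a with
  | q l => exact VV_mul_q hK l hx
  | qbar l =>
    have h : (pw [Letter.qbar l] : Qt n K) * x = B0 l * x - qq l * x := by
      rw [qb_def, qb_eq, sub_mul]
    rw [h]
    exact VV_sub (VV_cen_mul (cen_B0 l) hx) (VV_mul_q hK l hx)
  | i => exact VV_mul_ei hx
  | j => exact VV_mul_ej hx
  | k => exact VV_mul_ek hx

lemma VV_pw (hK : (2 : K) ≠ 0) (w : List (Letter n)) : VV (pw w : Qt n K) := by
  induction w with
  | nil => rw [pw_nil]; exact VV_of_cen cen_one
  | cons a w ih => rw [pw_cons]; exact VV_mul_letter hK a ih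

lemma VV_all (hK : (2 : K) ≠ 0) (x : Qt n K) : VV x := by
  obtain ⟨f, rfl⟩ : ∃ f, qpi n K f = x := Quot.inductionOn x fun f => ⟨f, rfl⟩
  induction f using MonoidAlgebra.induction_on with
  | of g => exact VV_pw hK (FreeMonoid.toList g)
  | add f g hf hg => rw [map_add]; exact VV_add hf hg
  | smul r f hf => rw [qpi_smul]; exact VV_cen_mul (cen_sc r) hf

lemma Nf_V (hK : (2 : K) ≠ 0) {z0 z1 z2 z3 : Qt n K} (h0 : Cen z0) (h1 : Cen z1) (h2 : Cen z2) (h3 : Cen z3) :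
    Nf (z0 + z1 * ei + z2 * ej + z3 * ek) = z0 - z1 * ei - z2 * ej - z3 * ek := by
  rw [Nf_add, Nf_add, Nf_add, Nf_cen hK h0, Nf_cenmul h1, Nf_cenmul h2, Nf_cenmul h3,
    Nf_ei hK, Nf_ej hK, Nf_ek hK, mul_neg, mul_neg, mul_neg]
  abel

/-- The trace `x + Nf x` is central. -/
lemma tr_cen (hK : (2 : K) ≠ 0) (x : Qt n K) : Cen (x + Nf x) := by
  obtain ⟨z0, z1, z2, z3, h0, h1, h2, h3, rfl⟩ := VV_all hK x
  rw [Nf_V hK h0 h1 h2 h3]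
  have h : (z0 + z1 * ei + z2 * ej + z3 * ek) + (z0 - z1 * ei - z2 * ej - z3 * ek)
      = z0 + z0 := by abel
  rw [h]
  exact cen_add h0 h0

/-! ### Part 3: anti-multiplicativity of `Nf` and the bracket formula -/

lemma Nf_mul_ei (hK : (2 : K) ≠ 0) (x : Qt n K) : Nf (ei * x) = Nf x * (-ei) := by
  obtain ⟨z0, z1, z2, z3, h0, h1, h2, h3, rfl⟩ := VV_all hK x
  rw [ei_mul_V h0 h1 h2 h3, Nf_V hK (cen_neg h1) h0 (cen_neg h3) h2,
    Nf_V hK h0 h1 h2 h3]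
  simp only [sub_mul, mul_neg, neg_mul, mul_assoc, hii, hji, hki, mul_neg_one,
    neg_neg, mul_one, one_mul]
  abel

lemma Nf_mul_ej (hK : (2 : K) ≠ 0) (x : Qt n K) : Nf (ej * x) = Nf x * (-ej) := by
  obtain ⟨z0, z1, z2, z3, h0, h1, h2, h3, rfl⟩ := VV_all hK x
  rw [ej_mul_V h0 h1 h2 h3, Nf_V hK (cen_neg h2) h3 h0 (cen_neg h1),
    Nf_V hK h0 h1 h2 h3]
  simp only [sub_mul, mul_neg, neg_mul, mul_assoc, hij, hjj, hkj, mul_neg_one,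
    neg_neg, mul_one, one_mul]
  abel

lemma Nf_mul_ek (hK : (2 : K) ≠ 0) (x : Qt n K) : Nf (ek * x) = Nf x * (-ek) := by
  obtain ⟨z0, z1, z2, z3, h0, h1, h2, h3, rfl⟩ := VV_all hK x
  rw [ek_mul_V h0 h1 h2 h3, Nf_V hK (cen_neg h3) (cen_neg h2) h1 h0,
    Nf_V hK h0 h1 h2 h3]
  simp only [sub_mul, mul_neg, neg_mul, mul_assoc, hik, hjk, hkk, mul_neg_one,
    neg_neg, mul_one, one_mul]
  abel

lemma Nf_mul_q (hK : (2 : K) ≠ 0) (l : Fin n) (x : Qt n K) :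
    Nf ((qq l : Qt n K) * x) = Nf x * qb l := by
  have hd : (qq l : Qt n K) * x
      = hf * (B0 l * x) - hf * (B1 l * (ei * x)) - hf * (B2 l * (ej * x))
        - hf * (B3 l * (ek * x)) := by
    rw [qq_mul_expand hK l x, mul_sub, mul_sub, mul_sub]
  rw [hd, Nf_sub, Nf_sub, Nf_sub,
    Nf_cenmul cen_hf, Nf_cenmul cen_hf, Nf_cenmul cen_hf, Nf_cenmul cen_hf,
    Nf_cenmul (cen_B0 l), Nf_cenmul (cen_B1 l), Nf_cenmul (cen_B2 l),
    Nf_cenmul (cen_B3 l), Nf_mul_ei hK, Nf_mul_ej hK, Nf_mul_ek hK,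
    qb_decomp hK l]
  have t0 : Nf x * (hf * B0 l) = hf * (B0 l * Nf x) := by
    rw [swapC cen_hf (Nf x) (B0 l), ← cen_B0 l (Nf x)]
  have t1 : Nf x * (hf * (B1 l * ei)) = hf * (B1 l * (Nf x * ei)) := by
    rw [swapC cen_hf, swapC (cen_B1 l)]
  have t2 : Nf x * (hf * (B2 l * ej)) = hf * (B2 l * (Nf x * ej)) := by
    rw [swapC cen_hf, swapC (cen_B2 l)]
  have t3 : Nf x * (hf * (B3 l * ek)) = hf * (B3 l * (Nf x * ek)) := by
    rw [swapC cen_hf, swapC (cen_B3 l)]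
  rw [mul_add, mul_add, mul_add, mul_add, mul_add, mul_add, t0, t1, t2, t3]
  simp only [mul_neg, sub_neg_eq_add]

lemma Nf_letter_mul (hK : (2 : K) ≠ 0) (a : Letter n) (x : Qt n K) :
    Nf (pw [a] * x) = Nf x * Nf (pw [a]) := by
  cases a with
  | q l =>
    rw [qq_def, Nf_mul_q hK l x, Nf_q hK]
  | qbar l =>
    have hd : (pw [Letter.qbar l] : Qt n K) * x = B0 l * x - qq l * x := by
      rw [qb_def, qb_eq, sub_mul]
    rw [hd, qb_def, Nf_qb hK, Nf_sub, Nf_cenmul (cen_B0 l), Nf_mul_q hK,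
      cen_B0 l (Nf x), ← mul_sub,
      show (B0 l : Qt n K) - qb l = qq l from by unfold B0; abel]
  | i => rw [ei_def, Nf_mul_ei hK, Nf_ei hK]
  | j => rw [ej_def, Nf_mul_ej hK, Nf_ej hK]
  | k => rw [ek_def, Nf_mul_ek hK, Nf_ek hK]

lemma Nf_pw_mul (hK : (2 : K) ≠ 0) (w : List (Letter n)) :
    ∀ x : Qt n K, Nf (pw w * x) = Nf x * Nf (pw w) := by
  induction w with
  | nil => intro x; rw [pw_nil, one_mul, Nf_one hK, mul_one]
  | cons a w ih =>
    intro x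
    rw [pw_cons, Nf_letter_mul hK a (pw w), mul_assoc, Nf_letter_mul hK a (pw w * x),
      ih x, mul_assoc]

lemma hconjL (hK : (2 : K) ≠ 0) (a : Letter n) :
    sc (if a.isE = true then (-1 : K) else 1) * pw [Letter.conj a] = Nf (pw [a]) := by
  cases a with
  | q l =>
    simp only [Letter.isE, Letter.conj, Bool.false_eq_true, if_false, sc_one, one_mul]
    rw [qb_def, qq_def, Nf_q hK]
  | qbar l =>
    simp only [Letter.isE, Letter.conj, Bool.false_eq_true, if_false, sc_one, one_mul]
    rw [qb_def, qq_def, Nf_qb hK]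
  | i =>
    simp only [Letter.isE, Letter.conj, if_true, sc_neg_one]
    rw [ei_def, Nf_ei hK, neg_one_mul]
  | j =>
    simp only [Letter.isE, Letter.conj, if_true, sc_neg_one]
    rw [ej_def, Nf_ej hK, neg_one_mul]
  | k =>
    simp only [Letter.isE, Letter.conj, if_true, sc_neg_one]
    rw [ek_def, Nf_ek hK, neg_one_mul]

lemma conj_pw (hK : (2 : K) ≠ 0) (w : List (Letter n)) :
    sc ((-1 : K) ^ (w.filter (fun a => a.isE)).length) * pw ((w.map Letter.conj).reverse)
      = Nf (pw w) := by
  induction w with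
  | nil =>
    simp only [List.filter_nil, List.length_nil, pow_zero, sc_one, one_mul,
      List.map_nil, List.reverse_nil, pw_nil]
    exact (Nf_one hK).symm
  | cons a w ih =>
    have hsign : ((-1 : K) ^ (((a :: w).filter (fun a => a.isE)).length))
        = (if a.isE = true then (-1 : K) else 1)
          * (-1 : K) ^ ((w.filter (fun a => a.isE)).length) := by
      cases ha : a.isE with
      | false => simp [List.filter_cons, ha]
      | true => simp [List.filter_cons, ha, pow_succ, mul_comm]
    have hlist : ((a :: w).map Letter.conj).reverse
        = (w.map Letter.conj).reverse ++ [Letter.conj a] := by simp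
    rw [hlist, pw_append, hsign, sc_mul]
    have hc : Cen (sc (if a.isE = true then (-1 : K) else 1) : Qt n K) := cen_sc _
    rw [mul_assoc, ← mul_assoc (sc ((-1 : K) ^ _)) (pw _) (pw [Letter.conj a]),
      ← mul_assoc (sc (if a.isE = true then (-1 : K) else 1)), hc, mul_assoc,
      ih, hconjL hK a, ← Nf_letter_mul hK a (pw w), ← pw_cons]

lemma qpi_br (hK : (2 : K) ≠ 0) (w : List (Letter n)) :
    qpi n K (br w) = pw w + Nf (pw w) := by
  unfold br
  rw [map_add, qpi_smul,
    show qpi n K (Mw ((w.map Letter.conj).reverse)) = pw ((w.map Letter.conj).reverse)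
      from rfl,
    conj_pw hK w]
  rfl

end BracketShiftAux
/-- For all monomials `X` and `Y` in the free monoid on `𝒜`,
the polynomial `[X·Y] − [Y·X]` lies in the ideal `ℐ`. -/
theorem bracket_shift_mem_ideal
    (n : ℕ) (hn : 1 ≤ n) (K : Type*) [Field K] (hK : (2 : K) ≠ 0)
    (X Y : List (Letter n)) :
    br (X ++ Y) - br (Y ++ X) ∈ Iideal n K := by
  open BracketShiftAux in
  rw [BracketShiftAux.mem_I_iff, map_sub, BracketShiftAux.qpi_br hK (X ++ Y),
    BracketShiftAux.qpi_br hK (Y ++ X), BracketShiftAux.pw_append,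
    BracketShiftAux.pw_append Y X,
    BracketShiftAux.Nf_pw_mul hK X (BracketShiftAux.pw Y),
    BracketShiftAux.Nf_pw_mul hK Y (BracketShiftAux.pw X)]
  set a := (BracketShiftAux.pw X : BracketShiftAux.Qt n K) with ha
  set b := (BracketShiftAux.pw Y : BracketShiftAux.Qt n K) with hb
  set u := BracketShiftAux.Nf a with hu
  set v := BracketShiftAux.Nf b with hv
  have hs : BracketShiftAux.Cen (a + u) := BracketShiftAux.tr_cen hK a
  have ht : BracketShiftAux.Cen (b + v) := BracketShiftAux.tr_cen hK b
  have e1 : a*b + a*v + u*b + u*v = b*a + b*u + v*a + v*u := by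
    have h := hs (b + v)
    calc a*b + a*v + u*b + u*v = (a+u)*(b+v) := by noncomm_ring
      _ = (b+v)*(a+u) := h
      _ = b*a + b*u + v*a + v*u := by noncomm_ring
  have e2 : a*b + u*b = b*a + b*u := by
    have h := hs b
    calc a*b + u*b = (a+u)*b := by noncomm_ring
      _ = b*(a+u) := h
      _ = b*a + b*u := by noncomm_ring
  have e3 : b*a + v*a = a*b + a*v := by
    have h := ht a
    calc b*a + v*a = (b+v)*a := by noncomm_ring
      _ = a*(b+v) := (ht a).symm ▸ h
      _ = a*b + a*v := by noncomm_ring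
  have key : a*b + v*u - (b*a + u*v) = 0 := by
    have hrw : a*b + v*u - (b*a + u*v)
        = -(((a*b + a*v + u*b + u*v) - (b*a + b*u + v*a + v*u))
            - ((a*b + u*b) - (b*a + b*u)) + ((b*a + v*a) - (a*b + a*v))) := by abel
    rw [hrw, e1, e2, e3]
    abel
  exact key
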